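/- arXiv:math/0609334 — 2 statements merged into one kernel-verified Lean document; each statement's English description precedes it below -/
import Mathlib

section
/- For every integer k ≥ 1, the sets A_k = {(x_1,…,x_k) ∈ ℤ^k : x_1 ≥ −1, x_{i+1} − x_i ≥ −1 for 1 ≤ i < k, and −x_k ≥ −1} and B_k = {(x_1,…,x_{k+1}) ∈ ℤ^{k+1} : x_i ≥ −1 for every i and x_1 + ⋯ + x_{k+1} = 0} both have cardinality equal to the binomial coefficient C(2k+1, k). -/
noncomputable section

/-- The set `A_k ⊂ ℤ^k` : `x_1 ≥ -1`, `x_{i+1} - x_i ≥ -1` for `1 ≤ i < k`, `-x_k ≥ -1`. -/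
def Aset (k : ℕ) : Set (Fin k → ℤ) :=
  {x | (∀ h : 0 < k, (-1 : ℤ) ≤ x ⟨0, h⟩ ∧ x ⟨k - 1, by omega⟩ ≤ 1) ∧
    ∀ i j : Fin k, (j : ℕ) = (i : ℕ) + 1 → (-1 : ℤ) ≤ x j - x i}

/-- The set `B_k ⊂ ℤ^{k+1}` : all coordinates `≥ -1` and total sum `0`. -/
def Bset (k : ℕ) : Set (Fin (k + 1) → ℤ) :=
  {y | (∀ i, (-1 : ℤ) ≤ y i) ∧ ∑ i, y i = 0}

namespace CardsAB

/-- Shifted extension of `x : Fin k → ℤ` to `ℕ`: `exA k x n = x (n-1)` for `1 ≤ n ≤ k`,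
`0` otherwise. -/
def exA (k : ℕ) (x : Fin k → ℤ) : ℕ → ℤ := fun n =>
  if h : 0 < n ∧ n - 1 < k then x ⟨n - 1, h.2⟩ else 0

/-- Extension of `y : Fin (k+1) → ℤ` to `ℕ` by zero. -/
def exB (k : ℕ) (y : Fin (k + 1) → ℤ) : ℕ → ℤ := fun n =>
  if h : n < k + 1 then y ⟨n, h⟩ else 0

def toB (k : ℕ) (x : Fin k → ℤ) : Fin (k + 1) → ℤ := fun i =>
  exA k x (i.val + 1) - exA k x i.val

def toA (k : ℕ) (y : Fin (k + 1) → ℤ) : Fin k → ℤ := fun j =>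
  ∑ i ∈ Finset.range (j.val + 1), exB k y i

lemma exA_eq {k : ℕ} (x : Fin k → ℤ) (n : ℕ) (h : 0 < n ∧ n - 1 < k) :
    exA k x n = x ⟨n - 1, h.2⟩ := dif_pos h

lemma exA_eq0 {k : ℕ} (x : Fin k → ℤ) (n : ℕ) (h : ¬(0 < n ∧ n - 1 < k)) :
    exA k x n = 0 := dif_neg h

lemma exB_eq {k : ℕ} (y : Fin (k + 1) → ℤ) (n : ℕ) (h : n < k + 1) :
    exB k y n = y ⟨n, h⟩ := dif_pos h

lemma sum_exB {k : ℕ} (y : Fin (k + 1) → ℤ) :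
    ∑ i ∈ Finset.range (k + 1), exB k y i = ∑ i, y i := by
  rw [← Fin.sum_univ_eq_sum_range]
  exact Finset.sum_congr rfl fun i _ => (exB_eq y i.val i.isLt).trans (by rw [Fin.eta])

lemma toA_apply {k : ℕ} (y : Fin (k + 1) → ℤ) (j : Fin k) :
    toA k y j = ∑ i ∈ Finset.range (j.val + 1), exB k y i := rfl

lemma toB_apply {k : ℕ} (x : Fin k → ℤ) (i : Fin (k + 1)) :
    toB k x i = exA k x (i.val + 1) - exA k x i.val := rfl

lemma toB_mem {k : ℕ} (x : Fin k → ℤ) (hx : x ∈ Aset k) (hk : 1 ≤ k) : toB k x ∈ Bset k := by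
  obtain ⟨h1, h2⟩ := hx
  obtain ⟨ha, hb⟩ := h1 hk
  constructor
  · intro i
    rw [toB_apply]
    rcases Nat.eq_zero_or_pos i.val with h0 | h0
    · rw [h0, exA_eq x 1 ⟨Nat.one_pos, by omega⟩, exA_eq0 x 0 (by omega)]
      show (-1 : ℤ) ≤ x ⟨0, hk⟩ - 0
      linarith
    rcases Nat.lt_or_ge i.val k with hik | hik
    · rw [exA_eq x (i.val + 1) ⟨by omega, by omega⟩, exA_eq x i.val ⟨h0, by omega⟩]
      have hv : (⟨i.val + 1 - 1, by omega⟩ : Fin k) = ⟨i.val, hik⟩ := rfl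
      rw [hv]
      exact h2 ⟨i.val - 1, by omega⟩ ⟨i.val, hik⟩ (by simp; omega)
    · have hik' : i.val = k := by omega
      rw [hik', exA_eq0 x (k + 1) (by omega), exA_eq x k ⟨by omega, by omega⟩]
      have : x ⟨k - 1, by omega⟩ ≤ 1 := hb
      linarith
  · have := Fin.sum_univ_eq_sum_range (fun n => exA k x (n + 1) - exA k x n) (k + 1)
    calc ∑ i, toB k x i = ∑ n ∈ Finset.range (k + 1), (exA k x (n + 1) - exA k x n) := this
      _ = exA k x (k + 1) - exA k x 0 := Finset.sum_range_sub _ _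
      _ = 0 := by rw [exA_eq0 x (k + 1) (by omega), exA_eq0 x 0 (by omega)]; ring

lemma toA_toB {k : ℕ} (x : Fin k → ℤ) : toA k (toB k x) = x := by
  funext j
  have hstep : ∀ i ∈ Finset.range (j.val + 1),
      exB k (toB k x) i = exA k x (i + 1) - exA k x i := by
    intro i hi
    have hik : i < k + 1 := by have := j.isLt; simp at hi; omega
    rw [exB_eq _ i hik]
    rfl
  rw [toA_apply, Finset.sum_congr rfl hstep, Finset.sum_range_sub,
    exA_eq x (j.val + 1) ⟨by omega, by simp [j.isLt]⟩, exA_eq0 x 0 (by omega)]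
  rw [sub_zero]
  exact congrArg x (Fin.ext (Nat.add_sub_cancel ..))

lemma exA_toA {k : ℕ} (y : Fin (k + 1) → ℤ) (hy : ∑ i, y i = 0) (n : ℕ) (hn : n ≤ k + 1) :
    exA k (toA k y) n = ∑ i ∈ Finset.range n, exB k y i := by
  rcases Nat.eq_zero_or_pos n with h0 | h0
  · rw [h0, exA_eq0 _ 0 (by omega)]
    simp
  rcases Nat.lt_or_ge (n - 1) k with h1 | h1
  · rw [exA_eq _ n ⟨h0, h1⟩]
    show ∑ i ∈ Finset.range (n - 1 + 1), exB k y i = _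
    have hn2 : n - 1 + 1 = n := by omega
    rw [hn2]
  · have hn' : n = k + 1 := by omega
    subst hn'
    rw [exA_eq0 _ (k + 1) (by omega), sum_exB, hy]

lemma toB_toA {k : ℕ} (y : Fin (k + 1) → ℤ) (hy : ∑ i, y i = 0) : toB k (toA k y) = y := by
  funext i
  rw [toB_apply, exA_toA y hy (i.val + 1) i.isLt, exA_toA y hy i.val (le_of_lt i.isLt),
    Finset.sum_range_succ, exB_eq y i.val i.isLt, Fin.eta]
  ring

lemma toA_mem {k : ℕ} (y : Fin (k + 1) → ℤ) (hy : y ∈ Bset k) (hk : 1 ≤ k) : toA k y ∈ Aset k := by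
  obtain ⟨h1, h2⟩ := hy
  constructor
  · intro h
    constructor
    · show (-1 : ℤ) ≤ ∑ i ∈ Finset.range (0 + 1), exB k y i
      rw [Finset.sum_range_succ, Finset.sum_range_zero, exB_eq y 0 (Nat.succ_pos k)]
      linarith [h1 ⟨0, Nat.succ_pos k⟩]
    · have hsum : ∑ i ∈ Finset.range (k + 1), exB k y i = 0 := by rw [sum_exB, h2]
      have hk1 : toA k y ⟨k - 1, by omega⟩ = ∑ i ∈ Finset.range k, exB k y i := by
        show ∑ i ∈ Finset.range (k - 1 + 1), exB k y i = _
        have hk2 : k - 1 + 1 = k := by omega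
        rw [hk2]
      have hlast : ∑ i ∈ Finset.range (k + 1), exB k y i
          = ∑ i ∈ Finset.range k, exB k y i + y ⟨k, by omega⟩ := by
        rw [Finset.sum_range_succ, exB_eq y k (by omega)]
      have hyk := h1 ⟨k, by omega⟩
      rw [hk1]
      rw [hlast] at hsum
      linarith
  · intro i j hji
    rw [toA_apply, toA_apply, hji, Finset.sum_range_succ, exB_eq y (i.val + 1) (by omega)]
    have hyk := h1 ⟨i.val + 1, by omega⟩
    linarith

/-- The bijection `A_k ≃ B_k`. -/
def equivAB (k : ℕ) (hk : 1 ≤ k) : Aset k ≃ Bset k where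
  toFun x := ⟨toB k x.1, toB_mem x.1 x.2 hk⟩
  invFun y := ⟨toA k y.1, toA_mem y.1 y.2 hk⟩
  left_inv x := Subtype.ext (toA_toB x.1)
  right_inv y := Subtype.ext (toB_toA y.1 y.2.2)

/-- The bijection between `B_k` and nonnegative tuples summing to `k+1`. -/
def equivBN (k : ℕ) : Bset k ≃ {f : Fin (k + 1) → ℕ // ∑ i, f i = k + 1} where
  toFun y := ⟨fun i => (y.1 i + 1).toNat, by
    have h1 : ∀ i, ((y.1 i + 1).toNat : ℤ) = y.1 i + 1 := fun i =>
      Int.toNat_of_nonneg (by linarith [y.2.1 i])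
    have h2 : ((∑ i, (y.1 i + 1).toNat : ℕ) : ℤ) = ((k + 1 : ℕ) : ℤ) := by
      push_cast
      rw [Finset.sum_congr rfl fun i _ => h1 i, Finset.sum_add_distrib, y.2.2]
      simp
    exact_mod_cast h2⟩
  invFun f := ⟨fun i => (f.1 i : ℤ) - 1, by
    constructor
    · intro i
      show (-1 : ℤ) ≤ (f.1 i : ℤ) - 1
      have : (0 : ℤ) ≤ (f.1 i : ℤ) := Int.natCast_nonneg _
      linarith
    · show ∑ i, ((f.1 i : ℤ) - 1) = 0
      have h2 : ((∑ i, f.1 i : ℕ) : ℤ) = ((k + 1 : ℕ) : ℤ) :=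
        congrArg (fun n : ℕ => (n : ℤ)) f.2
      push_cast at h2
      rw [Finset.sum_sub_distrib, h2]
      simp⟩
  left_inv y := by
    apply Subtype.ext
    funext i
    have h : ((y.1 i + 1).toNat : ℤ) = y.1 i + 1 := Int.toNat_of_nonneg (by linarith [y.2.1 i])
    simp only [h]
    ring
  right_inv f := by
    apply Subtype.ext
    funext i
    simp

lemma card_N (k : ℕ) :
    Nat.card {f : Fin (k + 1) → ℕ // ∑ i, f i = k + 1} = (2 * k + 1).choose k := by
  rw [Nat.card_congr (Sym.equivNatSumOfFintype (Fin (k + 1)) (k + 1)).symm,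
    Nat.card_eq_fintype_card, Sym.card_sym_eq_choose]
  have h1 : Fintype.card (Fin (k + 1)) + (k + 1) - 1 = 2 * k + 1 := by
    simp only [Fintype.card_fin]
    omega
  rw [h1, ← Nat.choose_symm (show k + 1 ≤ 2 * k + 1 by omega)]
  congr 1
  omega

end CardsAB

theorem cards_A_B (k : ℕ) (hk : 1 ≤ k) :
    Nat.card (Aset k) = (2 * k + 1).choose k ∧
    Nat.card (Bset k) = (2 * k + 1).choose k := by
  have hB : Nat.card (Bset k) = (2 * k + 1).choose k := by
    rw [Nat.card_congr (CardsAB.equivBN k), CardsAB.card_N k]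
  exact ⟨by rw [Nat.card_congr (CardsAB.equivAB k hk), hB], hB⟩
end
end

section
/- Let q be a regular critical weight sequence, μ = μ^q, and let m_1 be the mean of μ_1. There exists a constant β_1 > 0 such that for every sufficiently large n, P_μ( |#T⁰ − m_1 n| > n^{3/4} and #T¹ = n ) ≤ exp(−n^{β_1}). -/
open MeasureTheory Filter Topology
open scoped Classical

noncomputable section

namespace PaperWeill

/-! ### Plane trees, coded as finite sets of words over `ℕ = {1,2,…}` -/

/-- The number of children `k_u(T)` of the vertex `u` in the finite set of words `T`. -/
def childCount (T : Finset (List ℕ)) (u : List ℕ) : ℕ :=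
  (T.filter fun v => v ≠ [] ∧ v.dropLast = u).card

/-- `T` is a plane tree: it contains the root, is stable under taking fathers, uses only
letters `≥ 1`, and the children of `u` are exactly `u1, …, u k_u(T)`. -/
def IsPlaneTree (T : Finset (List ℕ)) : Prop :=
  [] ∈ T ∧ (∀ (u : List ℕ) (j : ℕ), u ++ [j] ∈ T → u ∈ T) ∧
    (∀ v ∈ T, ∀ i ∈ v, 1 ≤ i) ∧
    ∀ u ∈ T, ∀ j : ℕ, (u ++ [j] ∈ T ↔ 1 ≤ j ∧ j ≤ childCount T u)

/-- Vertices of type 0 (even generation). -/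
def type0 (T : Finset (List ℕ)) : Finset (List ℕ) := T.filter fun v => Even v.length

/-- Vertices of type 1 (odd generation). -/
def type1 (T : Finset (List ℕ)) : Finset (List ℕ) := T.filter fun v => ¬ Even v.length

/-- `#T¹`. -/
def t1card (T : Finset (List ℕ)) : ℕ := (type1 T).card

/-- The `P_μ`-weight of an individual plane tree. -/
def treeWt (μ₀ μ₁ : ℕ → ℝ) (T : Finset (List ℕ)) : ℝ :=
  ∏ u ∈ T, if Even u.length then μ₀ (childCount T u) else μ₁ (childCount T u)

/-- `P_μ(E)`, the probability of an event `E` under the two-type Galton-Watson law. -/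
def tP (μ₀ μ₁ : ℕ → ℝ) (E : Finset (List ℕ) → Prop) : ℝ :=
  ∑' T : Finset (List ℕ), if IsPlaneTree T ∧ E T then treeWt μ₀ μ₁ T else 0

/-- conditional probability `P_μ(E ∣ F)`. -/
def tCond (μ₀ μ₁ : ℕ → ℝ) (E F : Finset (List ℕ) → Prop) : ℝ :=
  tP μ₀ μ₁ (fun T => E T ∧ F T) / tP μ₀ μ₁ F

/-! ### Regular critical weight sequences -/

/-- `N(k) = C(2k-1, k-1)`. -/
def Ncoef (k : ℕ) : ℕ := (2 * k - 1).choose (k - 1)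

/-- `f_q(x) = Σ_k N(k+1) q_{k+1} x^k`. -/
def fq (q : ℕ → ℝ) (x : ℝ) : ℝ := ∑' k : ℕ, (Ncoef (k + 1) : ℝ) * q (k + 1) * x ^ k

/-- The derivative series `f_q'(x) = Σ_k k N(k+1) q_{k+1} x^{k-1}`. -/
def fq' (q : ℕ → ℝ) (x : ℝ) : ℝ :=
  ∑' k : ℕ, (k : ℝ) * (Ncoef (k + 1) : ℝ) * q (k + 1) * x ^ (k - 1)

/-- `q` is a regular critical weight sequence with distinguished solution `Z = Z_q`. -/
structure RegCrit (q : ℕ → ℝ) (Z : ℝ) : Prop where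
  nonneg : ∀ i, 0 ≤ q i
  some_pos : ∃ i, 2 ≤ i ∧ 0 < q i
  Zpos : 0 < Z
  fixedPoint : fq q Z = 1 - 1 / Z
  critical : Z ^ 2 * fq' q Z = 1
  regular : ∃ R, Z < R ∧ Summable fun k : ℕ => (Ncoef (k + 1) : ℝ) * q (k + 1) * R ^ k

/-- `μ₀^q`, the geometric distribution with parameter `f_q(Z_q)`. -/
def mu0 (q : ℕ → ℝ) (Z : ℝ) (k : ℕ) : ℝ := Z⁻¹ * fq q Z ^ k

/-- `μ₁^q(k) = Z^k N(k+1) q_{k+1} / f_q(Z)`. -/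
def mu1 (q : ℕ → ℝ) (Z : ℝ) (k : ℕ) : ℝ := Z ^ k * (Ncoef (k + 1) : ℝ) * q (k + 1) / fq q Z

/-- The mean `m₁` of `μ₁^q`. -/
def meanMu1 (q : ℕ → ℝ) (Z : ℝ) : ℝ := ∑' k : ℕ, (k : ℝ) * mu1 q Z k

/-! ### Spatial trees -/

/-- `(x_1,…,x_k) ∈ A_k`. -/
def vecInA (k : ℕ) (x : ℕ → ℤ) : Prop :=
  1 ≤ k → (-1 ≤ x 1 ∧ x k ≤ 1 ∧ ∀ j : ℕ, 1 ≤ j → j < k → -1 ≤ x (j + 1) - x j)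

/-- Admissibility of the displacement field `D` on the tree `T` (`D v = U_v - U_{v̌}`):
children of type-0 vertices get displacement `0` (the Dirac mass `ν₀`), and around each
type-1 vertex the displacement vector lies in `A_k` (uniform law `ν₁^k`), or in its
reversal if `rev = true` (law `ν̃₁^k`). -/
def dispOK (rev : Bool) (T : Finset (List ℕ)) (D : List ℕ →₀ ℤ) : Prop :=
  (∀ v : List ℕ, D v ≠ 0 → v ∈ T ∧ v ≠ [] ∧ ¬ Even v.dropLast.length) ∧
    ∀ u ∈ T, ¬ Even u.length →
      vecInA (childCount T u)
        fun j => if rev then D (u ++ [childCount T u + 1 - j]) else D (u ++ [j])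

/-- The `ℙ_{μ,ν,x}`-weight of an individual spatial tree `(T, D)`. -/
def spatialWt (μ₀ μ₁ : ℕ → ℝ) (rev : Bool) (T : Finset (List ℕ)) (D : List ℕ →₀ ℤ) : ℝ :=
  if IsPlaneTree T ∧ dispOK rev T D then
    treeWt μ₀ μ₁ T * ∏ u ∈ type1 T, ((Ncoef (childCount T u + 1) : ℝ))⁻¹
  else 0

/-- The label function determined by the initial value `x` and the displacements `D`. -/
def labelOf (x : ℝ) (D : List ℕ →₀ ℤ) (v : List ℕ) : ℝ :=
  x + ∑ i ∈ Finset.range v.length, ((D (v.take (i + 1)) : ℤ) : ℝ)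

/-- Expectation `𝔼_{μ,ν,x}[F(T,U)]` (with `ν̃` in place of `ν` if `rev = true`). -/
def sE (μ₀ μ₁ : ℕ → ℝ) (rev : Bool) (x : ℝ)
    (F : Finset (List ℕ) → (List ℕ → ℝ) → ℝ) : ℝ :=
  ∑' p : Finset (List ℕ) × (List ℕ →₀ ℤ),
    F p.1 (labelOf x p.2) * spatialWt μ₀ μ₁ rev p.1 p.2

/-- `ℙ_{μ,ν,x}(E)`. -/
def sP (μ₀ μ₁ : ℕ → ℝ) (rev : Bool) (x : ℝ)
    (E : Finset (List ℕ) → (List ℕ → ℝ) → Prop) : ℝ :=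
  sE μ₀ μ₁ rev x fun T U => if E T U then 1 else 0

/-- Conditional expectation `𝔼_{μ,ν,x}[F ∣ G]`. -/
def sCondE (μ₀ μ₁ : ℕ → ℝ) (rev : Bool) (x : ℝ)
    (F : Finset (List ℕ) → (List ℕ → ℝ) → ℝ)
    (G : Finset (List ℕ) → (List ℕ → ℝ) → Prop) : ℝ :=
  sE μ₀ μ₁ rev x (fun T U => if G T U then F T U else 0) / sP μ₀ μ₁ rev x G

/-- Conditional probability `ℙ_{μ,ν,x}(E ∣ G)`. -/
def sCondP (μ₀ μ₁ : ℕ → ℝ) (rev : Bool) (x : ℝ)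
    (E G : Finset (List ℕ) → (List ℕ → ℝ) → Prop) : ℝ :=
  sP μ₀ μ₁ rev x (fun T U => E T U ∧ G T U) / sP μ₀ μ₁ rev x G

/-! ### Distinguished vertices -/

/-- `∂₀T`, the type-0 leaves of `T`. -/
def leaves0 (T : Finset (List ℕ)) : Finset (List ℕ) :=
  T.filter fun v => Even v.length ∧ childCount T v = 0

/-- `min{U_w : w ∈ T}`. -/
def minLabel (T : Finset (List ℕ)) (U : List ℕ → ℝ) : ℝ := sInf (U '' ↑T)

/-- `Δ₀`, the set of type-0 vertices with minimal label. -/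
def Delta0 (T : Finset (List ℕ)) (U : List ℕ → ℝ) : Finset (List ℕ) :=
  T.filter fun v => Even v.length ∧ U v = minLabel T U

/-- Strict lexicographical order on words. -/
def lexLt (u v : List ℕ) : Prop := List.Lex (· < ·) u v

/-- `v` is the first element of `Δ₀` in lexicographical order. -/
def IsFirstMin (T : Finset (List ℕ)) (U : List ℕ → ℝ) (v : List ℕ) : Prop :=
  v ∈ Delta0 T U ∧ ∀ w ∈ Delta0 T U, w ≠ v → lexLt v w

/-- `v_m`, the first element of `Δ₀` in lexicographical order. -/
def vmin (T : Finset (List ℕ)) (U : List ℕ → ℝ) : List ℕ :=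
  if h : ∃ v, IsFirstMin T U v then h.choose else []

/-- `U̲ > 0` : all labels of type-0 vertices other than the root are positive
(vacuously true if there are none, following the convention `min ∅ = ∞`). -/
def UnderbarPos (T : Finset (List ℕ)) (U : List ℕ → ℝ) : Prop :=
  ∀ v ∈ T, v ≠ [] → Even v.length → 0 < U v

/-- `U̲ ≥ 0`. -/
def UnderbarNonneg (T : Finset (List ℕ)) (U : List ℕ → ℝ) : Prop :=
  ∀ v ∈ T, v ≠ [] → Even v.length → 0 ≤ U v

/-! ### Contour function and re-rooting -/

/-- One step of the contour walk: from `cur`, having arrived from `prev`. -/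
def cnext (T : Finset (List ℕ)) (prev cur : List ℕ) : List ℕ :=
  if prev.length = cur.length + 1 then
    if prev.getLastD 0 < childCount T cur then cur ++ [prev.getLastD 0 + 1] else cur.dropLast
  else if 1 ≤ childCount T cur then cur ++ [1] else cur.dropLast

/-- The search-depth sequence `u_0, u_1, …, u_{2ζ}` of `T`. -/
def contourSeq (T : Finset (List ℕ)) : List (List ℕ) :=
  ((List.range (2 * T.card - 2)).foldl
    (fun acc _ => cnext T (acc.tail.headD (acc.headD [])) (acc.headD []) :: acc) [[]]).reverse

/-- The contour function of `T` at integer times. -/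
def contourHt (T : Finset (List ℕ)) (i : ℕ) : ℤ := (((contourSeq T).getD i []).length : ℤ)

/-- `[[k - t]]`, the representative modulo `2ζ` in `[0, 2ζ)`, where `k` is the time of the
first visit of `v₀`. -/
def wrapIdx (T : Finset (List ℕ)) (v₀ : List ℕ) (t : ℕ) : ℕ :=
  ((((contourSeq T).idxOf v₀ : ℤ) - (t : ℤ)) % (((contourSeq T).length : ℤ) - 1)).toNat

/-- The re-rooted contour function
`Ĉ^{(v₀)}(t) = C(k) + C([[k-t]]) - 2 inf_{s} C(s)`. -/
def Chat (T : Finset (List ℕ)) (v₀ : List ℕ) (t : ℕ) : ℤ :=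
  let k := (contourSeq T).idxOf v₀
  let m := wrapIdx T v₀ t
  contourHt T k + contourHt T m -
    2 * (Finset.Icc (min k m) (max k m)).inf' (Finset.nonempty_Icc.mpr min_le_max) (contourHt T)

/-- `2ζ - (l - k)`, the length of the time interval of the re-rooted contour. -/
def rerootLen (T : Finset (List ℕ)) (v₀ : List ℕ) : ℕ :=
  let cs := contourSeq T
  (cs.length - 1) - ((cs.length - 1 - cs.reverse.idxOf v₀) - cs.idxOf v₀)

/-- The successive heights `Ĉ^{(v₀)}(1), …, Ĉ^{(v₀)}(2ζ - (l-k))` of the re-rooted contour. -/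
def rerootHeights (T : Finset (List ℕ)) (v₀ : List ℕ) : List ℕ :=
  (List.range (rerootLen T v₀)).map fun t => (Chat T v₀ (t + 1)).toNat

/-- One step of the reconstruction of a plane tree from the list of heights of its contour
function; the state is (current vertex, vertices built so far, visit sequence so far). -/
def buildStep (st : List ℕ × Finset (List ℕ) × List (List ℕ)) (h : ℕ) :
    List ℕ × Finset (List ℕ) × List (List ℕ) :=
  if h = st.1.length + 1 then
    (st.1 ++ [childCount st.2.1 st.1 + 1],
      insert (st.1 ++ [childCount st.2.1 st.1 + 1]) st.2.1,
      st.2.2 ++ [st.1 ++ [childCount st.2.1 st.1 + 1]])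
  else (st.1.dropLast, st.2.1, st.2.2 ++ [st.1.dropLast])

/-- The re-rooted tree `T̂^{(v₀)}`: the unique plane tree whose contour function is
`Ĉ^{(v₀)}`, reconstructed from its list of heights. -/
def reroot (T : Finset (List ℕ)) (v₀ : List ℕ) : Finset (List ℕ) :=
  ((rerootHeights T v₀).foldl buildStep ([], {[]}, [[]])).2.1

/-- The search-depth sequence of the re-rooted tree `T̂^{(v₀)}`. -/
def rerootVisits (T : Finset (List ℕ)) (v₀ : List ℕ) : List (List ℕ) :=
  ((rerootHeights T v₀).foldl buildStep ([], {[]}, [[]])).2.2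

/-- The re-rooted labels `Û^{(v₀)}` : for `v` of type 0, `Û^{(v₀)}_v = U_{v̄} - U_{v₀}` where
`v̄` is the vertex of `T` corresponding to `v`, and `Û^{(v₀)}_v = Û^{(v₀)}_{v̌}` for `v` of
type 1. -/
def rerootLabel (T : Finset (List ℕ)) (U : List ℕ → ℝ) (v₀ v : List ℕ) : ℝ :=
  let w := if Even v.length then v else v.dropLast
  U ((contourSeq T).getD (wrapIdx T v₀ ((rerootVisits T v₀).idxOf w)) []) - U v₀

/-- `T^{(w₀)}`, the tree `T` with the strict descendants of `w₀` removed. -/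
def truncateAt (T : Finset (List ℕ)) (w₀ : List ℕ) : Finset (List ℕ) :=
  T.filter fun v => ¬(w₀ <+: v ∧ v ≠ w₀)

/-! ### The processes `J` and `K` -/

/-- `J_T(n)`, the number of type-0 vertices among the `n+1` lexicographically first
vertices of `T`. -/
def Jfun (T : Finset (List ℕ)) (n : ℕ) : ℕ :=
  (T.filter fun v => Even v.length ∧ (T.filter fun w => lexLt w v).card ≤ n).card

/-- `J̄_T(t) = J_T(ζ t) / #T⁰`. -/
def Jbar (T : Finset (List ℕ)) (t : ℝ) : ℝ :=
  (Jfun T ⌊((T.card - 1 : ℕ) : ℝ) * t⌋₊ : ℝ) / ((type0 T).card : ℝ)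

/-- The contour function at integer times, with values in `ℕ`. -/
def Cfn (T : Finset (List ℕ)) (l : ℕ) : ℕ := ((contourSeq T).getD l []).length

/-- `K_T(k) = 1 + #{l ∈ {1,…,k} : C(l) = max_{[l-1,l]} C and C(l) even}`. -/
def Kfun (T : Finset (List ℕ)) (k : ℕ) : ℕ :=
  1 + ((Finset.Icc 1 k).filter fun l => Cfn T (l - 1) ≤ Cfn T l ∧ Even (Cfn T l)).card

/-- `K̄_T(t) = K_T(2ζ t) / #T⁰`. -/
def Kbar (T : Finset (List ℕ)) (t : ℝ) : ℝ :=
  (Kfun T ⌊((2 * (T.card - 1) : ℕ) : ℝ) * t⌋₊ : ℝ) / ((type0 T).card : ℝ)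

/-! Every type-0 vertex other than the root is a child of a type-1 vertex, so
`#T⁰ = 1 + ∑_{u ∈ T¹} k_u(T)`. Tilting `μ₁` to `k ↦ μ₁(k) e^{θk} / M(θ)`, where `M` is the
moment generating function of `μ₁`, therefore multiplies the weight of a tree with `#T¹ = n`
by `e^{θ(#T⁰ - 1)} / M(θ)^n`. The tilted tree law still has total mass at most one, which gives
the Chernoff bound `P_μ(θ #T⁰ ≥ x, #T¹ = n) ≤ e^{θ - x} M(θ)^n`. Regularity of `q` makes `μ₁`
exponentially integrable, so `M(θ) ≤ exp (θ m₁ + B θ²)` for small `|θ|`; with `θ = ε n^{-1/4}`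
the two tails together are at most `2 exp (ε - ε n^{1/2} / 2) ≤ exp (-n^{1/4})` for large `n`. -/


def subtree (j : ℕ) (T : Finset (List ℕ)) : Finset (List ℕ) :=
  (T.filter fun v => v.head? = some j).image List.tail

lemma mem_subtree {j : ℕ} {T : Finset (List ℕ)} {w : List ℕ} :
    w ∈ subtree j T ↔ j :: w ∈ T := by
  simp only [subtree, Finset.mem_image, Finset.mem_filter]
  constructor
  · rintro ⟨_ | ⟨a, l⟩, ⟨hv, hh⟩, rfl⟩
    · simp at hh
    · simp only [List.head?_cons, Option.some_inj] at hh
      exact hh ▸ hv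
  · exact fun h => ⟨j :: w, ⟨h, rfl⟩, rfl⟩

lemma childCount_subtree (j : ℕ) (T : Finset (List ℕ)) (w : List ℕ) :
    childCount (subtree j T) w = childCount T (j :: w) := by
  unfold childCount
  refine Finset.card_nbij (j :: ·) ?_ (fun _ _ _ _ h => List.cons_injective h) ?_
  · intro l hl
    simp only [Finset.coe_filter, Set.mem_ofPred_eq, mem_subtree] at hl ⊢
    obtain ⟨hmem, hne, hd⟩ := hl
    exact ⟨hmem, List.cons_ne_nil _ _, by rw [List.dropLast_cons_of_ne_nil hne, hd]⟩
  · intro v hv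
    simp only [Finset.coe_filter, Set.mem_ofPred_eq] at hv
    obtain ⟨hmem, hne, hd⟩ := hv
    obtain ⟨l, a, rfl⟩ := List.eq_nil_or_concat v |>.resolve_left hne
    rw [List.concat_eq_append, List.dropLast_concat] at hd
    subst hd
    refine ⟨w ++ [a], ?_, by simp⟩
    simpa [mem_subtree] using hmem

namespace IsPlaneTree

variable {T : Finset (List ℕ)}

lemma mem_of_prefix (hT : IsPlaneTree T) {u v : List ℕ} (hv : v ∈ T) (hu : u <+: v) :
    u ∈ T := by
  induction v using List.reverseRecOn generalizing u with
  | nil => exact List.prefix_nil.mp hu ▸ hT.1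
  | append_singleton l a ih =>
    rcases List.prefix_concat_iff.mp hu with rfl | h
    · exact hv
    · exact ih (hT.2.1 l a hv) h

lemma mem_Icc_of_cons_mem (hT : IsPlaneTree T) {j : ℕ} {l : List ℕ} (h : j :: l ∈ T) :
    j ∈ Finset.Icc 1 (childCount T []) :=
  Finset.mem_Icc.mpr <|
  (hT.2.2.2 [] hT.1 j).mp (hT.mem_of_prefix h ⟨l, rfl⟩)

lemma isPlaneTree_subtree (hT : IsPlaneTree T) {j : ℕ} (h1 : 1 ≤ j) (h2 : j ≤ childCount T []) :
    IsPlaneTree (subtree j T) := by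
  refine ⟨mem_subtree.mpr ((hT.2.2.2 [] hT.1 j).mpr ⟨h1, h2⟩), fun u i h => ?_,
    fun v hv i hi => hT.2.2.1 (j :: v) (mem_subtree.mp hv) i (List.mem_cons_of_mem _ hi),
    fun u hu i => ?_⟩
  · exact mem_subtree.mpr (hT.2.1 (j :: u) i (mem_subtree.mp h))
  · rw [childCount_subtree, mem_subtree, ← hT.2.2.2 (j :: u) (mem_subtree.mp hu) i]
    rfl

lemma eq_insert_biUnion (hT : IsPlaneTree T) {k : ℕ} (hk : childCount T [] = k) :
    T = insert [] (Finset.univ.biUnion fun i : Fin k =>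
      (subtree ((i : ℕ) + 1) T).image (List.cons ((i : ℕ) + 1))) := by
  ext (_ | ⟨j, l⟩)
  · simp [hT.1]
  · simp only [Finset.mem_insert, reduceCtorEq, false_or, Finset.mem_biUnion, Finset.mem_univ,
      true_and, Finset.mem_image, mem_subtree, List.cons.injEq]
    constructor
    · intro h
      obtain ⟨h1, h2⟩ := Finset.mem_Icc.mp (hT.mem_Icc_of_cons_mem h)
      exact ⟨⟨j - 1, by omega⟩, l, by rwa [Nat.sub_add_cancel h1], by simp; omega, rfl⟩
    · rintro ⟨i, l, h, rfl, rfl⟩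
      exact h

end IsPlaneTree

lemma treeWt_nonneg {p₀ p₁ : ℕ → ℝ} (h₀ : ∀ k, 0 ≤ p₀ k) (h₁ : ∀ k, 0 ≤ p₁ k)
    (T : Finset (List ℕ)) : 0 ≤ treeWt p₀ p₁ T :=
  Finset.prod_nonneg fun u _ => by split_ifs <;> simp [h₀, h₁]

lemma IsPlaneTree.treeWt_eq_mul_prod_subtree {T : Finset (List ℕ)} (hT : IsPlaneTree T)
    (p₀ p₁ : ℕ → ℝ) :
    treeWt p₀ p₁ T = p₀ (childCount T []) *
      ∏ i : Fin (childCount T []), treeWt p₁ p₀ (subtree ((i : ℕ) + 1) T) := by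
  set branch : Fin (childCount T []) → Finset (List ℕ) :=
    fun i => (subtree ((i : ℕ) + 1) T).image (List.cons ((i : ℕ) + 1))
  have hroot : [] ∉ Finset.univ.biUnion branch := by simp [branch]
  have hdisj : Set.PairwiseDisjoint ↑(Finset.univ : Finset (Fin (childCount T []))) branch := by
    intro i _ i' _ hii'
    simp only [branch, Function.onFun, Finset.disjoint_left, Finset.mem_image]
    rintro _ ⟨l, _, rfl⟩ ⟨l', _, h⟩
    exact hii' (Fin.ext (Nat.succ_injective (List.cons_eq_cons.mp h.symm).1))
  unfold treeWt
  -- `prod_congr` rewrites the index set `T` only, not the `T` inside `childCount T`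
  rw [Finset.prod_congr (hT.eq_insert_biUnion rfl) fun _ _ => rfl, Finset.prod_insert hroot,
    Finset.prod_biUnion hdisj]
  congr 1
  refine Finset.prod_congr rfl fun i _ => ?_
  rw [Finset.prod_image fun _ _ _ _ h => List.cons_injective h]
  refine Finset.prod_congr rfl fun w _ => ?_
  simp only [List.length_cons, Nat.even_add_one, childCount_subtree]
  split_ifs <;> rfl

structure IsSubProb (p : ℕ → ℝ) : Prop where
  nonneg : ∀ k, 0 ≤ p k
  sum_le_one : ∀ F : Finset ℕ, ∑ k ∈ F, p k ≤ 1

lemma IsPlaneTree.eq_of_subtree_eq {T T' : Finset (List ℕ)} (hT : IsPlaneTree T)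
    (hT' : IsPlaneTree T') {k : ℕ} (hk : childCount T [] = k) (hk' : childCount T' [] = k)
    (h : ∀ i : Fin k, subtree ((i : ℕ) + 1) T = subtree ((i : ℕ) + 1) T') : T = T' := by
  rw [hT.eq_insert_biUnion hk, hT'.eq_insert_biUnion hk']
  simp only [h]

lemma sum_treeWt_le_of_childCount_eq {p₀ p₁ : ℕ → ℝ} (h₀ : ∀ k, 0 ≤ p₀ k)
    (h₁ : ∀ k, 0 ≤ p₁ k) {k : ℕ} {S F : Finset (Finset (List ℕ))}
    (hS : ∀ T ∈ S, IsPlaneTree T ∧ childCount T [] = k)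
    (hF : ∀ T ∈ S, ∀ i : Fin k, subtree ((i : ℕ) + 1) T ∈ F) :
    ∑ T ∈ S, treeWt p₀ p₁ T ≤ p₀ k * (∑ t ∈ F, treeWt p₁ p₀ t) ^ k := by
  set children : Finset (List ℕ) → Fin k → Finset (List ℕ) := fun T i => subtree ((i : ℕ) + 1) T
  have hinj : Set.InjOn children S := fun T hT T' hT' h =>
    (hS T hT).1.eq_of_subtree_eq (hS T' hT').1 (hS T hT).2 (hS T' hT').2 (congrFun h)
  calc ∑ T ∈ S, treeWt p₀ p₁ T
      = p₀ k * ∑ x ∈ S.image children, ∏ i, treeWt p₁ p₀ (x i) := by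
        rw [Finset.sum_image hinj, Finset.mul_sum]
        refine Finset.sum_congr rfl fun T hT => ?_
        obtain ⟨hpt, rfl⟩ := hS T hT
        exact hpt.treeWt_eq_mul_prod_subtree p₀ p₁
    _ ≤ p₀ k * ∑ x ∈ Fintype.piFinset fun _ : Fin k => F, ∏ i, treeWt p₁ p₀ (x i) := by
        refine mul_le_mul_of_nonneg_left (Finset.sum_le_sum_of_subset_of_nonneg ?_ ?_) (h₀ k)
        · intro x hx
          obtain ⟨T, hT, rfl⟩ := Finset.mem_image.mp hx
          exact Fintype.mem_piFinset.mpr (hF T hT)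
        · exact fun x _ _ => Finset.prod_nonneg fun i _ => treeWt_nonneg h₁ h₀ (x i)
    _ = p₀ k * (∑ t ∈ F, treeWt p₁ p₀ t) ^ k := by
        rw [← Finset.prod_univ_sum, Finset.prod_const, Finset.card_univ, Fintype.card_fin]

lemma sum_treeWt_le_one_of_length_lt (h : ℕ) :
    ∀ {p₀ p₁ : ℕ → ℝ}, IsSubProb p₀ → IsSubProb p₁ → ∀ S : Finset (Finset (List ℕ)),
      (∀ T ∈ S, IsPlaneTree T ∧ ∀ v ∈ T, v.length < h) → ∑ T ∈ S, treeWt p₀ p₁ T ≤ 1 := by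
  induction h with
  | zero =>
    intro p₀ p₁ _ _ S hS
    rw [Finset.sum_eq_zero fun T hT => absurd ((hS T hT).2 [] (hS T hT).1.1) (by simp)]
    exact zero_le_one
  | succ h ih =>
    intro p₀ p₁ hp₀ hp₁ S hS
    set F := S.biUnion fun T => (Finset.Icc 1 (childCount T [])).image (subtree · T)
    have hF : ∑ t ∈ F, treeWt p₁ p₀ t ≤ 1 := by
      refine ih hp₁ hp₀ F fun t ht => ?_
      obtain ⟨T, hT, j, hj, rfl⟩ : ∃ T ∈ S, ∃ j ∈ Finset.Icc 1 (childCount T []),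
          subtree j T = t := by simpa [F] using ht
      obtain ⟨h1, h2⟩ := Finset.mem_Icc.mp hj
      refine ⟨(hS T hT).1.isPlaneTree_subtree h1 h2, fun v hv => ?_⟩
      simpa using (hS T hT).2 _ (mem_subtree.mp hv)
    have hfiber : ∀ k, ∑ T ∈ S.filter (childCount · [] = k), treeWt p₀ p₁ T ≤ p₀ k := by
      intro k
      calc ∑ T ∈ S.filter (childCount · [] = k), treeWt p₀ p₁ T
          ≤ p₀ k * (∑ t ∈ F, treeWt p₁ p₀ t) ^ k := by
            refine sum_treeWt_le_of_childCount_eq hp₀.nonneg hp₁.nonneg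
              (fun T hT => ?_) fun T hT i => ?_
            · obtain ⟨hTS, hk⟩ := Finset.mem_filter.mp hT
              exact ⟨(hS T hTS).1, hk⟩
            · obtain ⟨hTS, rfl⟩ := Finset.mem_filter.mp hT
              exact Finset.mem_biUnion.mpr ⟨T, hTS, Finset.mem_image.mpr
                ⟨(i : ℕ) + 1, Finset.mem_Icc.mpr ⟨by omega, by omega⟩, rfl⟩⟩
        _ ≤ p₀ k := mul_le_of_le_one_right (hp₀.nonneg k)
            (pow_le_one₀ (Finset.sum_nonneg fun t _ => treeWt_nonneg hp₁.nonneg hp₀.nonneg t) hF)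
    rw [← Finset.sum_fiberwise_of_maps_to fun T hT => Finset.mem_image_of_mem (childCount · []) hT]
    exact (Finset.sum_le_sum fun k _ => hfiber k).trans (hp₀.sum_le_one _)

lemma sum_treeWt_le_one {p₀ p₁ : ℕ → ℝ} (hp₀ : IsSubProb p₀) (hp₁ : IsSubProb p₁)
    (S : Finset (Finset (List ℕ))) (hS : ∀ T ∈ S, IsPlaneTree T) :
    ∑ T ∈ S, treeWt p₀ p₁ T ≤ 1 :=
  sum_treeWt_le_one_of_length_lt _ hp₀ hp₁ S fun T hT =>
    ⟨hS T hT, fun _ hv => Nat.lt_succ_of_le <|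
      (Finset.le_sup (f := List.length) hv).trans (Finset.le_sup (f := (·.sup List.length)) hT)⟩

lemma length_dropLast_add_one {α : Type*} {v : List α} (hv : v ≠ []) : v.dropLast.length + 1 = v.length := by
  rw [List.length_dropLast]
  exact Nat.sub_add_cancel (List.length_pos_iff.mpr hv)

lemma IsPlaneTree.card_type0 {T : Finset (List ℕ)} (hT : IsPlaneTree T) :
    (type0 T).card = 1 + ∑ u ∈ type1 T, childCount T u := by
  set A := (type0 T).filter (· ≠ [])
  have hsplit : type0 T = insert [] A := by
    ext v
    by_cases hv : v = [] <;> simp [A, type0, hv, hT.1]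
  have hparent : ∀ v ∈ A, v.dropLast ∈ type1 T := by
    intro v hv
    simp only [A, type0, Finset.mem_filter] at hv
    obtain ⟨⟨hvT, heven⟩, hne⟩ := hv
    refine Finset.mem_filter.mpr ⟨hT.mem_of_prefix hvT (List.dropLast_prefix v), fun hodd => ?_⟩
    rw [← length_dropLast_add_one hne] at heven
    exact Nat.even_add_one.mp heven hodd
  rw [hsplit, Finset.card_insert_of_notMem (by simp [A]), Finset.card_eq_sum_card_fiberwise hparent,
    add_comm]
  congr 1
  refine Finset.sum_congr rfl fun u hu => ?_
  unfold childCount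
  congr 1
  ext v
  simp only [A, type0, type1, Finset.mem_filter] at hu ⊢
  constructor
  · rintro ⟨⟨⟨hvT, -⟩, hne⟩, hd⟩
    exact ⟨hvT, hne, hd⟩
  · rintro ⟨hvT, hne, rfl⟩
    refine ⟨⟨⟨hvT, ?_⟩, hne⟩, rfl⟩
    rw [← length_dropLast_add_one hne]
    exact Nat.even_add_one.mpr hu.2

lemma treeWt_mul_type1 (p₀ p₁ g : ℕ → ℝ) (T : Finset (List ℕ)) :
    treeWt p₀ (fun k => p₁ k * g k) T =
      treeWt p₀ p₁ T * ∏ u ∈ type1 T, g (childCount T u) := by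
  unfold treeWt type1
  rw [Finset.prod_filter, ← Finset.prod_mul_distrib]
  refine Finset.prod_congr rfl fun u _ => ?_
  split_ifs <;> ring

lemma IsPlaneTree.treeWt_mul_exp {T : Finset (List ℕ)} (hT : IsPlaneTree T)
    (p₀ p₁ : ℕ → ℝ) (θ c : ℝ) :
    treeWt p₀ (fun k => p₁ k * (Real.exp (θ * k) / c)) T =
      treeWt p₀ p₁ T * (Real.exp (θ * ((type0 T).card - 1)) / c ^ t1card T) := by
  rw [treeWt_mul_type1, Finset.prod_div_distrib, Finset.prod_const, ← Real.exp_sum,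
    ← Finset.mul_sum, hT.card_type0, t1card]
  push_cast
  ring_nf

lemma sum_treeWt_le_exp_mul_pow {p₀ p₁ : ℕ → ℝ} (hp₀ : IsSubProb p₀) (hp₁ : ∀ k, 0 ≤ p₁ k)
    {θ c : ℝ} (hc : 0 < c) (hmgf : ∀ F : Finset ℕ, ∑ k ∈ F, p₁ k * Real.exp (θ * k) ≤ c)
    (x : ℝ) (n : ℕ) (S : Finset (Finset (List ℕ))) :
    ∑ T ∈ S, (if IsPlaneTree T ∧ x ≤ θ * (type0 T).card ∧ t1card T = n
      then treeWt p₀ p₁ T else 0) ≤ Real.exp (θ - x) * c ^ n := by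
  set p₁' : ℕ → ℝ := fun k => p₁ k * (Real.exp (θ * k) / c)
  have hp₁' : IsSubProb p₁' := by
    refine ⟨fun k => mul_nonneg (hp₁ k) (by positivity), fun F => ?_⟩
    simp_rw [p₁', ← mul_div_assoc, ← Finset.sum_div]
    exact div_le_one_of_le₀ (hmgf F) hc.le
  have hpoint : ∀ T, (if IsPlaneTree T ∧ x ≤ θ * (type0 T).card ∧ t1card T = n
      then treeWt p₀ p₁ T else 0) ≤
        Real.exp (θ - x) * c ^ n * (if IsPlaneTree T then treeWt p₀ p₁' T else 0) := by
    intro T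
    split_ifs with hE hT hT
    · rw [hT.treeWt_mul_exp, hE.2.2]
      have hexp : Real.exp (θ * (type0 T).card - x) =
          Real.exp (θ - x) * Real.exp (θ * ((type0 T).card - 1)) := by
        rw [← Real.exp_add]
        ring_nf
      calc treeWt p₀ p₁ T ≤ treeWt p₀ p₁ T * Real.exp (θ * (type0 T).card - x) :=
            le_mul_of_one_le_right (treeWt_nonneg hp₀.nonneg hp₁ T)
              (Real.one_le_exp (sub_nonneg.mpr hE.2.1))
        _ = _ := by
            rw [hexp]
            field_simp
    · exact absurd hE.1 hT
    · exact mul_nonneg (by positivity) (treeWt_nonneg hp₀.nonneg hp₁'.nonneg T)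
    · simp
  calc _ ≤ ∑ T ∈ S, Real.exp (θ - x) * c ^ n * (if IsPlaneTree T then treeWt p₀ p₁' T else 0) :=
        Finset.sum_le_sum fun T _ => hpoint T
    _ = Real.exp (θ - x) * c ^ n * ∑ T ∈ S.filter IsPlaneTree, treeWt p₀ p₁' T := by
        rw [← Finset.mul_sum, Finset.sum_filter]
    _ ≤ Real.exp (θ - x) * c ^ n :=
        mul_le_of_le_one_right (by positivity)
          (sum_treeWt_le_one hp₀ hp₁' _ fun T hT => (Finset.mem_filter.mp hT).2)

lemma tP_abs_sub_gt_le {p₀ p₁ : ℕ → ℝ} (hp₀ : IsSubProb p₀) (hp₁ : ∀ k, 0 ≤ p₁ k)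
    {θ c₁ c₂ : ℝ} (hθ : 0 ≤ θ) (hc₁ : 0 < c₁) (hc₂ : 0 < c₂)
    (hmgf₁ : ∀ F : Finset ℕ, ∑ k ∈ F, p₁ k * Real.exp (θ * k) ≤ c₁)
    (hmgf₂ : ∀ F : Finset ℕ, ∑ k ∈ F, p₁ k * Real.exp (-θ * k) ≤ c₂) (a s : ℝ) (n : ℕ) :
    tP p₀ p₁ (fun T => |((type0 T).card : ℝ) - a| > s ∧ t1card T = n) ≤
      Real.exp (θ - θ * (a + s)) * c₁ ^ n + Real.exp (-θ - -θ * (a - s)) * c₂ ^ n := by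
  refine Real.tsum_le_of_sum_le (fun T => ?_) fun S => ?_
  · split_ifs with hT
    exacts [treeWt_nonneg hp₀.nonneg hp₁ T, le_rfl]
  refine (Finset.sum_le_sum fun T _ => ?_).trans ((Finset.sum_add_distrib).le.trans
    (add_le_add (sum_treeWt_le_exp_mul_pow hp₀ hp₁ hc₁ hmgf₁ _ n S)
      (sum_treeWt_le_exp_mul_pow hp₀ hp₁ hc₂ hmgf₂ _ n S)))
  have hw := treeWt_nonneg hp₀.nonneg hp₁ T
  by_cases hE : IsPlaneTree T ∧ |((type0 T).card : ℝ) - a| > s ∧ t1card T = n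
  · obtain ⟨hT, hdev, hn⟩ := hE
    rw [if_pos ⟨hT, hdev, hn⟩]
    rcases lt_abs.mp hdev with hdev | hdev
    · rw [if_pos ⟨hT, by nlinarith, hn⟩]
      exact le_add_of_nonneg_right (ite_nonneg hw le_rfl)
    · rw [if_pos (show IsPlaneTree T ∧ -θ * (a - s) ≤ -θ * (type0 T).card ∧ t1card T = n from
        ⟨hT, by nlinarith, hn⟩)]
      exact le_add_of_nonneg_left (ite_nonneg hw le_rfl)
  · rw [if_neg hE]
    exact add_nonneg (ite_nonneg hw le_rfl) (ite_nonneg hw le_rfl)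

lemma exp_le_one_add_add_sq_mul_exp_abs (x : ℝ) :
    Real.exp x ≤ 1 + x + x ^ 2 * Real.exp |x| := by
  have h1 : 1 ≤ Real.exp |x| := Real.one_le_exp (abs_nonneg x)
  rcases le_or_gt |x| 1 with hx | hx
  · nlinarith [(abs_le.mp (Real.abs_exp_sub_one_sub_id_le hx)).2, sq_nonneg x]
  · have hsq : |x| ≤ x ^ 2 := by nlinarith [sq_abs x]
    have hexp : Real.exp x ≤ Real.exp |x| := Real.exp_le_exp.mpr (le_abs_self x)
    nlinarith [neg_abs_le x]

lemma exp_mul_natCast_le {θ₀ θ : ℝ} (hθ : |θ| ≤ θ₀) (k : ℕ) :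
    Real.exp (θ * k) ≤ 1 + θ * k + θ ^ 2 * (k ^ 2 * Real.exp (θ₀ * k)) := by
  have habs : |θ * k| ≤ θ₀ * k := by
    rw [abs_mul, Nat.abs_cast]
    exact mul_le_mul_of_nonneg_right hθ k.cast_nonneg
  calc Real.exp (θ * k) ≤ 1 + θ * k + (θ * k) ^ 2 * Real.exp |θ * k| :=
        exp_le_one_add_add_sq_mul_exp_abs _
    _ ≤ 1 + θ * k + (θ * k) ^ 2 * Real.exp (θ₀ * k) := by
        gcongr
    _ = 1 + θ * k + θ ^ 2 * (k ^ 2 * Real.exp (θ₀ * k)) := by ring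

lemma IsSubProb.sum_mul_exp_le {p : ℕ → ℝ} (hp : IsSubProb p) {θ₀ θ : ℝ}
    (hB : Summable fun k : ℕ => p k * (k ^ 2 * Real.exp (θ₀ * k))) (hθ : |θ| ≤ θ₀)
    (F : Finset ℕ) :
    ∑ k ∈ F, p k * Real.exp (θ * k) ≤
      Real.exp (θ * ∑' k : ℕ, k * p k + θ ^ 2 * ∑' k : ℕ, p k * (k ^ 2 * Real.exp (θ₀ * k))) := by
  have hθ₀ : 0 ≤ θ₀ := (abs_nonneg θ).trans hθ
  have hps : Summable p := summable_of_sum_le hp.nonneg hp.sum_le_one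
  have hmean : Summable fun k : ℕ => (k : ℝ) * p k := by
    refine hB.of_nonneg_of_le (fun k => mul_nonneg k.cast_nonneg (hp.nonneg k)) fun k => ?_
    have hk : (k : ℝ) ≤ k ^ 2 * Real.exp (θ₀ * k) := by
      have hk2 : (k : ℝ) ≤ k ^ 2 := by exact_mod_cast Nat.le_self_pow two_ne_zero k
      exact hk2.trans (le_mul_of_one_le_right (by positivity) (Real.one_le_exp (by positivity)))
    nlinarith [hp.nonneg k]
  have hpoint : ∀ k : ℕ, p k * Real.exp (θ * k) ≤
      p k + θ * (k * p k) + θ ^ 2 * (p k * (k ^ 2 * Real.exp (θ₀ * k))) := by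
    intro k
    have := mul_le_mul_of_nonneg_left (exp_mul_natCast_le hθ k) (hp.nonneg k)
    linarith
  have hdom : Summable fun k : ℕ =>
      p k + θ * (k * p k) + θ ^ 2 * (p k * (k ^ 2 * Real.exp (θ₀ * k))) :=
    (hps.add (hmean.mul_left θ)).add (hB.mul_left _)
  have hsum : Summable fun k : ℕ => p k * Real.exp (θ * k) :=
    hdom.of_nonneg_of_le (fun k => mul_nonneg (hp.nonneg k) (Real.exp_pos _).le) hpoint
  calc ∑ k ∈ F, p k * Real.exp (θ * k)
      ≤ ∑' k : ℕ, p k * Real.exp (θ * k) :=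
        hsum.sum_le_tsum F fun k _ => mul_nonneg (hp.nonneg k) (Real.exp_pos _).le
    _ ≤ ∑' k : ℕ, (p k + θ * (k * p k) + θ ^ 2 * (p k * (k ^ 2 * Real.exp (θ₀ * k)))) :=
        hsum.tsum_le_tsum hpoint hdom
    _ = ∑' k : ℕ, p k + (θ * ∑' k : ℕ, k * p k +
          θ ^ 2 * ∑' k : ℕ, p k * (k ^ 2 * Real.exp (θ₀ * k))) := by
        rw [(hps.add (hmean.mul_left θ)).tsum_add (hB.mul_left _), hps.tsum_add (hmean.mul_left θ),
          tsum_mul_left, tsum_mul_left, add_assoc]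
    _ ≤ _ := by
        linarith [Real.tsum_le_of_sum_le hp.nonneg hp.sum_le_one, Real.add_one_le_exp
          (θ * ∑' k : ℕ, k * p k + θ ^ 2 * ∑' k : ℕ, p k * (k ^ 2 * Real.exp (θ₀ * k)))]

lemma tP_abs_sub_mean_gt_le {p₀ p₁ : ℕ → ℝ} (hp₀ : IsSubProb p₀) (hp₁ : IsSubProb p₁)
    {θ₀ θ : ℝ} (hB : Summable fun k : ℕ => p₁ k * (k ^ 2 * Real.exp (θ₀ * k)))
    (hθ : 0 ≤ θ) (hθθ₀ : θ ≤ θ₀) (s : ℝ) (n : ℕ) :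
    tP p₀ p₁ (fun T => |((type0 T).card : ℝ) - (∑' k : ℕ, k * p₁ k) * n| > s ∧ t1card T = n) ≤
      2 * Real.exp (θ - θ * s + n * θ ^ 2 * ∑' k : ℕ, p₁ k * (k ^ 2 * Real.exp (θ₀ * k))) := by
  set m := ∑' k : ℕ, k * p₁ k
  set B := ∑' k : ℕ, p₁ k * (k ^ 2 * Real.exp (θ₀ * k))
  refine (tP_abs_sub_gt_le hp₀ hp₁.nonneg hθ (Real.exp_pos (θ * m + θ ^ 2 * B))
    (Real.exp_pos (-θ * m + (-θ) ^ 2 * B)) (hp₁.sum_mul_exp_le hB (by rwa [abs_of_nonneg hθ]))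
    (hp₁.sum_mul_exp_le hB (by rwa [abs_neg, abs_of_nonneg hθ])) (m * n) s n).trans ?_
  rw [← Real.exp_nat_mul, ← Real.exp_nat_mul, ← Real.exp_add, ← Real.exp_add, two_mul]
  exact add_le_add (Real.exp_le_exp.mpr (le_of_eq (by ring)))
    (Real.exp_le_exp.mpr (by ring_nf; linarith))

lemma summable_mul_pow_mul_pow_of_lt {a : ℕ → ℝ} (ha : ∀ k, 0 ≤ a k) {R x : ℝ}
    (hR : Summable fun k : ℕ => a k * R ^ k) (hx : 0 ≤ x) (hxR : x < R) (m : ℕ) :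
    Summable fun k : ℕ => a k * (k ^ m * x ^ k) := by
  have hR0 : 0 < R := hx.trans_lt hxR
  obtain ⟨C, hC⟩ := hR.tendsto_atTop_zero.bddAbove_range
  have hr : ‖x / R‖ < 1 := by
    rwa [Real.norm_of_nonneg (div_nonneg hx hR0.le), div_lt_one hR0]
  refine ((summable_pow_mul_geometric_of_norm_lt_one m hr).mul_left C).of_nonneg_of_le
    (fun k => by have := ha k; positivity) fun k => ?_
  calc a k * (k ^ m * x ^ k) = a k * R ^ k * (k ^ m * (x / R) ^ k) := by
        rw [div_pow]
        field_simp
    _ ≤ C * (k ^ m * (x / R) ^ k) :=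
        mul_le_mul_of_nonneg_right (hC ⟨k, rfl⟩) (by positivity)

namespace RegCrit

variable {q : ℕ → ℝ} {Z : ℝ}

lemma coef_nonneg (hq : RegCrit q Z) (k : ℕ) : 0 ≤ (Ncoef (k + 1) : ℝ) * q (k + 1) :=
  mul_nonneg (Nat.cast_nonneg _) (hq.nonneg _)

lemma fq_nonneg (hq : RegCrit q Z) : 0 ≤ fq q Z :=
  tsum_nonneg fun k => mul_nonneg (hq.coef_nonneg k) (pow_nonneg hq.Zpos.le k)

lemma summable_coef_mul_pow (hq : RegCrit q Z) :
    Summable fun k : ℕ => (Ncoef (k + 1) : ℝ) * q (k + 1) * Z ^ k := by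
  obtain ⟨R, hZR, hR⟩ := hq.regular
  exact hR.of_nonneg_of_le (fun k => mul_nonneg (hq.coef_nonneg k) (pow_nonneg hq.Zpos.le k))
    fun k => mul_le_mul_of_nonneg_left (pow_le_pow_left₀ hq.Zpos.le hZR.le k) (hq.coef_nonneg k)

lemma isSubProb_mu0 (hq : RegCrit q Z) : IsSubProb (mu0 q Z) := by
  have hf := hq.fq_nonneg
  have hf1 : fq q Z < 1 := by
    rw [hq.fixedPoint]
    linarith [one_div_pos.mpr hq.Zpos]
  have hZ : 0 ≤ Z⁻¹ := inv_nonneg.mpr hq.Zpos.le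
  refine ⟨fun k => mul_nonneg hZ (pow_nonneg hf k), fun F => ?_⟩
  calc ∑ k ∈ F, mu0 q Z k = Z⁻¹ * ∑ k ∈ F, fq q Z ^ k := (Finset.mul_sum _ _ _).symm
    _ ≤ Z⁻¹ * ∑' k : ℕ, fq q Z ^ k := mul_le_mul_of_nonneg_left
        ((summable_geometric_of_lt_one hf hf1).sum_le_tsum F fun k _ => pow_nonneg hf k) hZ
    _ = 1 := by
        rw [tsum_geometric_of_lt_one hf hf1, hq.fixedPoint, sub_sub_cancel, one_div, inv_inv,
          inv_mul_cancel₀ hq.Zpos.ne']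

lemma isSubProb_mu1 (hq : RegCrit q Z) : IsSubProb (mu1 q Z) := by
  have hf := hq.fq_nonneg
  have hmu1 : ∀ k, mu1 q Z k = (Ncoef (k + 1) : ℝ) * q (k + 1) * Z ^ k / fq q Z := fun k => by
    unfold mu1
    ring
  refine ⟨fun k => ?_, fun F => ?_⟩
  · rw [hmu1]
    exact div_nonneg (mul_nonneg (hq.coef_nonneg k) (pow_nonneg hq.Zpos.le k)) hf
  · simp_rw [hmu1, ← Finset.sum_div]
    exact div_le_one_of_le₀ (hq.summable_coef_mul_pow.sum_le_tsum F fun k _ =>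
      mul_nonneg (hq.coef_nonneg k) (pow_nonneg hq.Zpos.le k)) hf

lemma exists_summable_mu1_mul_sq_exp (hq : RegCrit q Z) :
    ∃ θ₀ > 0, Summable fun k : ℕ => mu1 q Z k * (k ^ 2 * Real.exp (θ₀ * k)) := by
  obtain ⟨R, hZR, hR⟩ := hq.regular
  have hlog : 0 < Real.log (R / Z) := Real.log_pos ((one_lt_div hq.Zpos).mpr hZR)
  refine ⟨Real.log (R / Z) / 2, half_pos hlog, ?_⟩
  have hyR : Z * Real.exp (Real.log (R / Z) / 2) < R := by
    calc Z * Real.exp (Real.log (R / Z) / 2) < Z * Real.exp (Real.log (R / Z)) :=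
          mul_lt_mul_of_pos_left (Real.exp_lt_exp.mpr (half_lt_self hlog)) hq.Zpos
      _ = R := by
          rw [Real.exp_log (div_pos (hq.Zpos.trans hZR) hq.Zpos), mul_div_cancel₀ _ hq.Zpos.ne']
  refine ((summable_mul_pow_mul_pow_of_lt hq.coef_nonneg hR
    (mul_pos hq.Zpos (Real.exp_pos _)).le hyR 2).mul_right (fq q Z)⁻¹).congr fun k => ?_
  rw [mul_pow, ← Real.exp_nat_mul, mul_comm (k : ℝ)]
  unfold mu1
  ring

end RegCrit

lemma two_mul_exp_le_exp_neg {ε B t : ℝ} (hε : 0 < ε) (hεB : ε * B ≤ 1 / 2) (ht : 1 ≤ t)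
    (hεt : 2 * (2 + ε) ≤ ε * t) :
    2 * Real.exp (ε / t - ε / t * t ^ 3 + t ^ 4 * (ε / t) ^ 2 * B) ≤ Real.exp (-t) := by
  have ht0 : 0 < t := one_pos.trans_le ht
  have hexponent : ε / t - ε / t * t ^ 3 + t ^ 4 * (ε / t) ^ 2 * B =
      ε / t - ε * t ^ 2 + ε * B * (ε * t ^ 2) := by
    field_simp
  have h1 : ε / t ≤ ε := div_le_self hε.le ht
  have h2 : ε * B * (ε * t ^ 2) ≤ ε * t ^ 2 / 2 := by
    nlinarith [mul_le_mul_of_nonneg_right hεB (mul_pos hε (pow_pos ht0 2)).le]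
  have h3 : 1 + ε + t ≤ ε * t ^ 2 / 2 := by nlinarith
  calc 2 * Real.exp (ε / t - ε / t * t ^ 3 + t ^ 4 * (ε / t) ^ 2 * B)
      ≤ Real.exp 1 * Real.exp (ε / t - ε / t * t ^ 3 + t ^ 4 * (ε / t) ^ 2 * B) := by
        gcongr
        linarith [Real.add_one_le_exp 1]
    _ ≤ Real.exp (-t) := by
        rw [← Real.exp_add, hexponent]
        exact Real.exp_le_exp.mpr (by linarith)

lemma eventually_two_mul_exp_le {ε B : ℝ} (hε : 0 < ε) (hεB : ε * B ≤ 1 / 2) :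
    ∀ᶠ n : ℕ in atTop, ε / (n : ℝ) ^ ((1 : ℝ) / 4) ≤ ε ∧
      2 * Real.exp (ε / (n : ℝ) ^ ((1 : ℝ) / 4) - ε / (n : ℝ) ^ ((1 : ℝ) / 4) * n ^ ((3 : ℝ) / 4) +
        n * (ε / (n : ℝ) ^ ((1 : ℝ) / 4)) ^ 2 * B) ≤ Real.exp (-(n : ℝ) ^ ((1 : ℝ) / 4)) := by
  filter_upwards [((tendsto_rpow_atTop (by norm_num : (0 : ℝ) < 1 / 4)).comp
    tendsto_natCast_atTop_atTop).eventually_ge_atTop (max 1 (2 * (2 + ε) / ε))] with n hn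
  set t := (n : ℝ) ^ ((1 : ℝ) / 4)
  replace hn : max 1 (2 * (2 + ε) / ε) ≤ t := hn
  have ht : 1 ≤ t := le_of_max_le_left hn
  have hεt : 2 * (2 + ε) ≤ ε * t := by
    have := le_of_max_le_right hn
    rw [div_le_iff₀ hε] at this
    linarith
  have hpow (k : ℕ) : (n : ℝ) ^ ((k : ℝ) / 4) = t ^ k := by
    rw [← Real.rpow_natCast, ← Real.rpow_mul n.cast_nonneg]
    ring_nf
  have hn4 : (n : ℝ) = t ^ 4 := by simpa using hpow 4
  refine ⟨div_le_self hε.le ht, ?_⟩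
  rw [show (3 : ℝ) / 4 = ((3 : ℕ) : ℝ) / 4 by norm_num, hpow 3, hn4]
  exact two_mul_exp_le_exp_neg hε hεB ht hεt

/-- estimate `(β₁)` in the proof of Lemma `feuilles`:
`P_μ(|#T⁰ - m₁ n| > n^{3/4}, #T¹ = n) ≤ exp(-n^{β₁})` for large `n`. -/
theorem stmt10 (q : ℕ → ℝ) (Z : ℝ) (hq : RegCrit q Z) :
    ∃ β₁ : ℝ, 0 < β₁ ∧ ∀ᶠ n : ℕ in atTop,
      tP (mu0 q Z) (mu1 q Z)
          (fun T => |((type0 T).card : ℝ) - meanMu1 q Z * n| > (n : ℝ) ^ ((3 : ℝ) / 4) ∧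
            t1card T = n) ≤
        Real.exp (-(n : ℝ) ^ β₁) := by
  obtain ⟨θ₀, hθ₀, hB⟩ := hq.exists_summable_mu1_mul_sq_exp
  set B := ∑' k : ℕ, mu1 q Z k * (k ^ 2 * Real.exp (θ₀ * k))
  have hB0 : 0 ≤ B := tsum_nonneg fun k => mul_nonneg (hq.isSubProb_mu1.nonneg k) (by positivity)
  obtain ⟨ε, hε, hεθ₀, hεB⟩ : ∃ ε > 0, ε ≤ θ₀ ∧ ε * B ≤ 1 / 2 := by
    refine ⟨min θ₀ (1 / (2 * (B + 1))), lt_min hθ₀ (by positivity), min_le_left _ _, ?_⟩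
    calc min θ₀ (1 / (2 * (B + 1))) * B ≤ 1 / (2 * (B + 1)) * B :=
          mul_le_mul_of_nonneg_right (min_le_right _ _) hB0
      _ ≤ 1 / 2 := by
          rw [div_mul_eq_mul_div, div_le_div_iff₀ (by positivity) two_pos]
          linarith
  refine ⟨1 / 4, by norm_num, ?_⟩
  filter_upwards [eventually_two_mul_exp_le hε hεB] with n ⟨hθε, hbound⟩
  exact (tP_abs_sub_mean_gt_le hq.isSubProb_mu0 hq.isSubProb_mu1 hB (by positivity)
    (hθε.trans hεθ₀) _ n).trans hbound

end PaperWeill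
end
end
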